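/- arXiv:1605.02755 — 6 statements merged into one kernel-verified Lean document; each statement's English description precedes it below -/
import Mathlib

section
/- Let R be a commutative ring, I ⊆ R an ideal, and x ∈ R a nonzerodivisor on R/I. Then for every n ≥ 1 there is an isomorphism of R-modules I(R/x^nR) = (I + x^nR)/x^nR ≅ I/x^nI. -/
/-! Restricting `R → R ⧸ J` to `I` gives `I ⧸ (I ∩ J) ≅ I(R ⧸ J)`. For `J = x ^ n R`, an element
`x ^ n r` of `I ∩ J` has `r ∈ I` because `x` is a nonzerodivisor modulo `I`, so `I ∩ J = x ^ n I`. -/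

namespace Ideal

variable {R : Type*} [CommRing R]

theorem mem_of_pow_mul_mem {I : Ideal R} {x : R} (hx : ∀ r : R, x * r ∈ I → r ∈ I) :
    ∀ (m : ℕ) (r : R), x ^ m * r ∈ I → r ∈ I
  | 0, r, hr => by simpa using hr
  | m + 1, r, hr => hx r <| mem_of_pow_mul_mem hx m (x * r) <| by rwa [← mul_assoc, ← pow_succ]

theorem span_singleton_smul_top_eq_comap (I : Ideal R) {a : R} (ha : ∀ r : R, a * r ∈ I → r ∈ I) :
    span {a} • (⊤ : Submodule R I) = Submodule.comap I.subtype (span {a}) := by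
  apply le_antisymm
  · rw [Submodule.smul_le]
    intro c hc b _
    exact (span {a}).mul_mem_right _ hc
  · rintro ⟨b, hbI⟩ hb
    obtain ⟨r, rfl⟩ := mem_span_singleton.mp hb
    change a • (⟨r, ha r hbI⟩ : I) ∈ _
    exact Submodule.smul_mem_smul (mem_span_singleton_self a) trivial

def quotientMkRestrict (I J : Ideal R) : I →ₗ[R] R ⧸ J :=
  (Quotient.mkₐ R J).toLinearMap ∘ₗ I.subtype

theorem ker_quotientMkRestrict (I J : Ideal R) :
    LinearMap.ker (quotientMkRestrict I J) = Submodule.comap I.subtype J := by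
  ext a
  simp [quotientMkRestrict, Quotient.eq_zero_iff_mem]

theorem range_quotientMkRestrict (I J : Ideal R) :
    LinearMap.range (quotientMkRestrict I J) = (I.map (Quotient.mk J)).restrictScalars R := by
  ext y
  simp [quotientMkRestrict, mem_map_iff_of_surjective _ Quotient.mk_surjective]

noncomputable def quotientComapEquivMap (I J : Ideal R) :
    (I ⧸ Submodule.comap I.subtype J) ≃ₗ[R] (I.map (Quotient.mk J)).restrictScalars R :=
  (Submodule.quotEquivOfEq _ _ (ker_quotientMkRestrict I J).symm).trans <|
    (quotientMkRestrict I J).quotKerEquivRange.trans <|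
      LinearEquiv.ofEq _ _ (range_quotientMkRestrict I J)

end Ideal

theorem image_ideal_iso_quotient_pow_smul_general (R : Type*) [CommRing R] (I : Ideal R) (x : R)
    (hx : ∀ r : R, x * r ∈ I → r ∈ I) (n : ℕ) :
    Nonempty ((↥I ⧸ (Ideal.span {x ^ n} • (⊤ : Submodule R ↥I))) ≃ₗ[R]
      ↥((Ideal.map (Ideal.Quotient.mk (Ideal.span {x ^ n})) I).restrictScalars R)) :=
  ⟨(Submodule.quotEquivOfEq _ _ <|
      I.span_singleton_smul_top_eq_comap (Ideal.mem_of_pow_mul_mem hx n)).trans <|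
    I.quotientComapEquivMap _⟩

/-- Let `R` be a commutative ring, `I ⊆ R` an ideal, and `x ∈ R` a nonzerodivisor on `R/I`.
Then for every `n ≥ 1` there is an isomorphism of `R`-modules
`I(R/x^nR) = (I + x^nR)/x^nR ≅ I/x^nI`. -/
theorem image_ideal_iso_quotient_pow_smul (R : Type*) [CommRing R] (I : Ideal R) (x : R)
    (hx : ∀ r : R, x * r ∈ I → r ∈ I) (n : ℕ) (hn : 1 ≤ n) :
    Nonempty ((↥I ⧸ (Ideal.span {x ^ n} • (⊤ : Submodule R ↥I))) ≃ₗ[R]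
      ↥((Ideal.map (Ideal.Quotient.mk (Ideal.span {x ^ n})) I).restrictScalars R)) :=
  image_ideal_iso_quotient_pow_smul_general R I x hx n
end

section
/- Let R be a Noetherian N-graded ring with R_0 a field, and let R^♮ = ⊕_{t≥0} R_{≥t} be the Rees-type algebra of the filtration by R_{≥t}. If R^♮ is Noetherian, then there exists n ≥ 1 such that R_{≥nt} = (R_{≥n})^t for every t ≥ 1. -/
/-!
Since `R^♮` is Noetherian, its ideal of polynomials without constant term is generated by finitely
many monomials `y_j X^{e_j}` with `e_j ≥ 1` and `y_j ∈ R_{≥e_j}`. Comparing coefficients,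
`R_{≥m} = ∑_j y_j R_{≥m-e_j}` for `m ≥ 1`, so `R_{≥m}` is spanned by the monomials in the `y_j` of
weight `∑ e_j ≥ m`. With `L = ∏ e_j`, `k` the number of generators and `n = (k+1)L`, a monomial of
weight `≥ 2n` contains a submonomial of weight exactly `n`: pigeonhole on the exponents yields one
`y_j^{L/e_j}` at a time. Peeling off such blocks puts every monomial of weight `≥ nt` into
`(R_{≥n})^t`.
-/

open Polynomial

universe u

namespace Multiset

variable {ι : Type*} (e : ι → ℕ) {L : ℕ}

lemma exists_replicate_le_of_card_mul_lt [Fintype ι] (hL : ∀ j, e j ∣ L)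
    {s : Multiset ι} (hs : Fintype.card ι * L < (s.map e).sum) :
    ∃ j, replicate (L / e j) j ≤ s := by
  classical
  by_contra! h
  have hcount : ∀ j, s.count j • e j ≤ L := fun j => by
    have hlt : s.count j < L / e j := lt_of_not_ge fun hle => h j (le_count_iff_replicate_le.1 hle)
    rw [smul_eq_mul, mul_comm]
    exact ((Nat.lt_div_iff_mul_lt' (hL j) _).1 hlt).le
  refine hs.not_ge ?_
  calc (s.map e).sum = ∑ j ∈ s.toFinset, s.count j • e j := Finset.sum_multiset_map_count s e
    _ ≤ ∑ j, s.count j • e j := Finset.sum_le_sum_of_subset (Finset.subset_univ _)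
    _ ≤ ∑ _j : ι, L := Finset.sum_le_sum fun j _ => hcount j
    _ = Fintype.card ι * L := by simp

lemma exists_le_sum_map_eq_mul [Fintype ι] (hL : ∀ j, e j ∣ L) (hL0 : 0 < L) (c : ℕ)
    {s : Multiset ι} (hs : (Fintype.card ι + c) * L ≤ (s.map e).sum) :
    ∃ t ≤ s, (t.map e).sum = c * L := by
  classical
  induction c with
  | zero => exact ⟨0, zero_le _, by simp⟩
  | succ c ih =>
    obtain ⟨t, hts, ht⟩ := ih (le_trans (Nat.mul_le_mul_right _ (by omega)) hs)
    have hsplit : (s.map e).sum = c * L + ((s - t).map e).sum := by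
      rw [← ht, ← sum_add, ← map_add, add_tsub_cancel_of_le hts]
    obtain ⟨j, hj⟩ := exists_replicate_le_of_card_mul_lt e hL (s := s - t) (by nlinarith)
    refine ⟨t + replicate (L / e j) j, (le_tsub_iff_left hts).1 hj, ?_⟩
    simp [ht, Nat.div_mul_cancel (hL j), add_mul]

variable {R : Type*} [CommRing R] {I : ℕ → Ideal R} [SetLike.GradedMonoid I]

lemma prod_map_mem_of_gradedMonoid (y : ι → R) (hy : ∀ j, y j ∈ I (e j)) (s : Multiset ι) :
    (s.map y).prod ∈ I (s.map e).sum := by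
  induction s using Multiset.induction_on with
  | empty => simpa using SetLike.GradedOne.one_mem
  | cons j s ih => simpa using SetLike.mul_mem_graded (hy j) ih

lemma prod_map_mem_pow [Fintype ι] (hI : Antitone I) (y : ι → R) (hy : ∀ j, y j ∈ I (e j))
    (hL : ∀ j, e j ∣ L) (hL0 : 0 < L) (t : ℕ) {s : Multiset ι}
    (hs : (Fintype.card ι + 1) * L * (t + 1) ≤ (s.map e).sum) :
    (s.map y).prod ∈ I ((Fintype.card ι + 1) * L) ^ (t + 1) := by
  classical
  induction t generalizing s with
  | zero =>
    rw [zero_add, pow_one]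
    exact hI (by simpa using hs) (prod_map_mem_of_gradedMonoid e y hy s)
  | succ t ih =>
    obtain ⟨u, hus, hu⟩ := exists_le_sum_map_eq_mul e hL hL0 (Fintype.card ι + 1) (s := s)
      (le_trans (by nlinarith [Nat.zero_le ((Fintype.card ι + 1) * L * t)]) hs)
    have hsplit : (s.map e).sum = (u.map e).sum + ((s - u).map e).sum := by
      rw [← sum_add, ← map_add, add_tsub_cancel_of_le hus]
    rw [← add_tsub_cancel_of_le hus, map_add, prod_add, pow_succ']
    exact Ideal.mul_mem_mul (hI hu.ge (prod_map_mem_of_gradedMonoid e y hy u))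
      (ih (by nlinarith))

end Multiset

lemma Ideal.le_span_prod_map {ι R : Type*} [CommRing R] {I : ℕ → Ideal R} (y : ι → R)
    (e : ι → ℕ) (he : ∀ j, 0 < e j)
    (hgen : ∀ m, 0 < m → I m ≤ ⨆ j, Ideal.span {y j} * I (m - e j)) (m : ℕ) :
    I m ≤ Ideal.span {z | ∃ s : Multiset ι, m ≤ (s.map e).sum ∧ (s.map y).prod = z} := by
  induction m using Nat.strong_induction_on with
  | _ m ih =>
  rcases Nat.eq_zero_or_pos m with rfl | hm
  · have h1 : (1 : R) ∈ {z | ∃ s : Multiset ι, 0 ≤ (s.map e).sum ∧ (s.map y).prod = z} :=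
      ⟨0, le_rfl, by simp⟩
    rw [(Ideal.eq_top_iff_one _).2 (Ideal.subset_span h1)]
    exact le_top
  refine (hgen m hm).trans (iSup_le fun j x hx => ?_)
  obtain ⟨z, hz, rfl⟩ := Ideal.mem_span_singleton_mul.1 hx
  refine Ideal.span_mono ?_ (Ideal.span_mul_span' {y j} _ ▸
    Ideal.mul_mem_mul (Ideal.mem_span_singleton_self _) (ih (m - e j) (by grind) hz))
  rintro _ ⟨_, rfl, _, ⟨s, hs, rfl⟩, rfl⟩
  exact ⟨j ::ₘ s, by simp; omega, by simp⟩

lemma Ideal.pow_le_of_gradedMonoid {R : Type*} [CommRing R] {I : ℕ → Ideal R}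
    [SetLike.GradedMonoid I] (n t : ℕ) : I n ^ t ≤ I (n * t) := by
  induction t with
  | zero => simp [Ideal.one_eq_top, (Ideal.eq_top_iff_one _).2 SetLike.GradedOne.one_mem]
  | succ t ih =>
    rw [pow_succ, Nat.mul_succ]
    exact Ideal.mul_le.2 fun x hx z hz => SetLike.mul_mem_graded (ih hx) hz

theorem Ideal.exists_eq_pow_of_le_iSup_span_mul {ι R : Type*} [Fintype ι] [CommRing R]
    {I : ℕ → Ideal R} [SetLike.GradedMonoid I] (hI : Antitone I) (y : ι → R) (e : ι → ℕ)
    (hy : ∀ j, y j ∈ I (e j)) (he : ∀ j, 0 < e j)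
    (hgen : ∀ m, 0 < m → I m ≤ ⨆ j, Ideal.span {y j} * I (m - e j)) :
    ∃ n, 1 ≤ n ∧ ∀ t, 1 ≤ t → I (n * t) = I n ^ t := by
  have hL : ∀ j, e j ∣ ∏ i, e i := fun j => Finset.dvd_prod_of_mem e (Finset.mem_univ j)
  have hL0 : 0 < ∏ i, e i := Finset.prod_pos fun j _ => he j
  refine ⟨(Fintype.card ι + 1) * ∏ i, e i, Nat.mul_pos (Nat.succ_pos _) hL0, fun t ht => ?_⟩
  obtain ⟨t, rfl⟩ := Nat.exists_eq_add_of_le' ht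
  refine le_antisymm ((Ideal.le_span_prod_map y e he hgen _).trans (Ideal.span_le.2 ?_))
    (Ideal.pow_le_of_gradedMonoid _ _)
  rintro _ ⟨s, hs, rfl⟩
  exact Multiset.prod_map_mem_pow e hI y hy hL hL0 t hs

section GradedRing

variable {R : Type*} [CommRing R] (𝒜 : ℕ → AddSubgroup R) [GradedRing 𝒜] {I : ℕ → Ideal R}

lemma antitone_of_mem_iff_decompose_eq_zero
    (hI : ∀ t x, x ∈ I t ↔ ∀ i < t, (DirectSum.decompose 𝒜 x i : R) = 0) : Antitone I :=
  fun _ _ hab x hx => (hI _ x).2 fun i hi => (hI _ x).1 hx i (hi.trans_le hab)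

lemma gradedMonoid_of_mem_iff_decompose_eq_zero
    (hI : ∀ t x, x ∈ I t ↔ ∀ i < t, (DirectSum.decompose 𝒜 x i : R) = 0) :
    SetLike.GradedMonoid I where
  one_mem := (hI 0 1).2 fun i hi => absurd hi i.not_lt_zero
  mul_mem a b x z hx hz := by
    classical
    refine (hI _ _).2 fun k hk => ?_
    rw [DirectSum.decompose_mul, DirectSum.coe_mul_apply_eq_sum_antidiagonal]
    refine Finset.sum_eq_zero fun ij hij => ?_
    rw [Finset.HasAntidiagonal.mem_antidiagonal] at hij
    rcases lt_or_ge ij.1 a with h | h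
    · rw [(hI a x).1 hx _ h, zero_mul]
    · rw [(hI b z).1 hz _ (by omega), mul_zero]

end GradedRing

theorem Polynomial.exists_generators_of_isNoetherianRing_rees {R : Type u} [CommRing R]
    {I : ℕ → Ideal R} {N : Subalgebra R R[X]} (hN : ∀ p : R[X], p ∈ N ↔ ∀ t, p.coeff t ∈ I t)
    [IsNoetherianRing N] :
    ∃ (ι : Type u) (_ : Fintype ι) (y : ι → R) (e : ι → ℕ), (∀ j, y j ∈ I (e j)) ∧
      (∀ j, 0 < e j) ∧ ∀ m, 0 < m → I m ≤ ⨆ j, Ideal.span {y j} * I (m - e j) := by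
  classical
  have monomial_mem {d : ℕ} {c : R} (hc : c ∈ I d) : monomial d c ∈ N :=
    (hN _).2 fun t => by rw [coeff_monomial]; split_ifs with h <;> [exact h ▸ hc; exact zero_mem _]
  let S : Set N := {p | ∃ d c, 0 < d ∧ c ∈ I d ∧ (p : R[X]) = monomial d c}
  obtain ⟨G, hGS, hG⟩ := (Submodule.fg_span_iff_fg_span_finset_subset (R := N) S).1
    (IsNoetherian.noetherian _)
  choose e y he hy hmon using fun g : G => hGS g.2
  refine ⟨G, inferInstance, y, e, hy, he, fun m hm x hx => ?_⟩
  have hxS : (⟨monomial m x, monomial_mem hx⟩ : N) ∈ Submodule.span N (G : Set N) :=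
    hG ▸ Submodule.subset_span ⟨m, x, hm, hx, rfl⟩
  obtain ⟨f, -, hf⟩ := Submodule.mem_span_finset.1 hxS
  have hcoeff : x = ∑ g ∈ G, ((f g : R[X]) * g).coeff m := by
    simpa using (congrArg (fun p : N => (p : R[X]).coeff m) hf).symm
  rw [hcoeff]
  refine Ideal.sum_mem _ fun g hg => Ideal.mem_iSup_of_mem ⟨g, hg⟩ ?_
  have hfg : (f g : R[X]) * (g : R[X]) = C (y ⟨g, hg⟩) * (X ^ e ⟨g, hg⟩ * (f g : R[X])) := by
    rw [show (g : R[X]) = _ from hmon ⟨g, hg⟩, ← C_mul_X_pow_eq_monomial]; ring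
  rw [hfg, coeff_C_mul, coeff_X_pow_mul']
  refine Ideal.mul_mem_mul (Ideal.mem_span_singleton_self _) ?_
  split_ifs
  · exact (hN _).1 (f g).2 _
  · exact zero_mem _

theorem rees_noetherian_power_of_filtration_general
    (R : Type*) [CommRing R]
    (𝒜 : ℕ → AddSubgroup R) [GradedRing 𝒜]
    (I : ℕ → Ideal R)
    (hI : ∀ (t : ℕ) (x : R), x ∈ I t ↔ ∀ i : ℕ, i < t → (DirectSum.decompose 𝒜 x i : R) = 0)
    (N : Subalgebra R (Polynomial R))
    (hN : ∀ p : Polynomial R, p ∈ N ↔ ∀ t : ℕ, p.coeff t ∈ I t)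
    (hNoeth : IsNoetherianRing ↥N) :
    ∃ n : ℕ, 1 ≤ n ∧ ∀ t : ℕ, 1 ≤ t → I (n * t) = (I n) ^ t := by
  have := gradedMonoid_of_mem_iff_decompose_eq_zero 𝒜 hI
  obtain ⟨ι, _, y, e, hy, he, hgen⟩ := exists_generators_of_isNoetherianRing_rees hN
  exact Ideal.exists_eq_pow_of_le_iSup_span_mul (antitone_of_mem_iff_decompose_eq_zero 𝒜 hI)
    y e hy he hgen

/-- Let `R` be a Noetherian `ℕ`-graded ring with `R₀` a field, let `I t = R_{≥t}` be the ideal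
of elements of degree `≥ t`, and let `N = R^♮ = ⊕_{t ≥ 0} R_{≥t}` be the Rees-type algebra of
the filtration (realized as the subalgebra `⊕ R_{≥t} Xᵗ` of `R[X]`).  If `R^♮` is Noetherian,
then there exists `n ≥ 1` with `R_{≥nt} = (R_{≥n})ᵗ` for every `t ≥ 1`. -/
theorem rees_noetherian_power_of_filtration
    (R : Type*) [CommRing R] [IsNoetherianRing R]
    (𝒜 : ℕ → AddSubgroup R) [GradedRing 𝒜] (hk : IsField ↥(𝒜 0))
    (I : ℕ → Ideal R)
    (hI : ∀ (t : ℕ) (x : R), x ∈ I t ↔ ∀ i : ℕ, i < t → (DirectSum.decompose 𝒜 x i : R) = 0)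
    (N : Subalgebra R (Polynomial R))
    (hN : ∀ p : Polynomial R, p ∈ N ↔ ∀ t : ℕ, p.coeff t ∈ I t)
    (hNoeth : IsNoetherianRing ↥N) :
    ∃ n : ℕ, 1 ≤ n ∧ ∀ t : ℕ, 1 ≤ t → I (n * t) = (I n) ^ t :=
  rees_noetherian_power_of_filtration_general R 𝒜 I hI N hN hNoeth
end

section
/- Let R be an N-graded Noetherian ring with I = R_{≥n} for some n ≥ 1 such that R_{≥nt} = I^t for all t ≥ 1. Then in the associated graded ring G = ⊕_{t≥0} I^t/I^{t+1}, every homogeneous element represented by x ∈ R of internal degree strictly greater than nt (in the t-th piece I^t/I^{t+1}) is nilpotent; consequently the reduction of G is isomorphic to the Veronese subring ⊕_{t≥0} R_{nt} when R is reduced. -/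
set_option synthInstance.maxHeartbeats 400000

/-!
Write `R_{≥a}` for the ideal of elements with no homogeneous component of degree `< a`, so that
`Iᵗ = R_{≥nt}`. For `x ∈ R_{≥a}` and `y ∈ R_{≥b}` the degree `a + b` component of `xy` is
`x_a y_b`; hence `ψ : ∑ qₜ Xᵗ ↦ ∑ₜ (qₜ)_{nt}` is a ring homomorphism from the Rees algebra `N`
onto the Veronese subring `V`. Its kernel consists of the `q` with `qₜ ∈ R_{≥nt+1}` for all `t`,
and for such `q` the `t`-th coefficient of `qⁿ` lies in `R_{≥nt+n} = Iᵗ⁺¹`, so `qⁿ ∈ K`. Since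
`K ⊆ ker ψ` and `R` is reduced, `ker ψ = √K`, so `G_red = N/√K ≅ V`. A homogeneous `x` of degree
`> nt` placed in degree `t` lies in `ker ψ`, hence is nilpotent in `G = N/K`.
-/

open Finset.HasAntidiagonal Polynomial

theorem Ideal.nilradical_quotient {A : Type*} [CommRing A] (K : Ideal A) :
    nilradical (A ⧸ K) = K.radical.map (Ideal.Quotient.mk K) := by
  rw [Ideal.map_radical_of_surjective Ideal.Quotient.mk_surjective (Ideal.mk_ker).le,
    Ideal.map_quotient_self]
  rfl

noncomputable def RingHom.quotientNilradicalEquivRange {A B : Type*} [CommRing A] [Ring B]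
    (f : A →+* B) {K : Ideal A} (h : K.radical = RingHom.ker f) :
    (A ⧸ K) ⧸ nilradical (A ⧸ K) ≃+* f.range :=
  (Ideal.quotEquivOfEq (Ideal.nilradical_quotient K)).trans <|
    (DoubleQuot.quotQuotEquivQuotOfLE K.le_radical).trans <|
      (Ideal.quotEquivOfEq h).trans f.quotientKerEquivRange

namespace GradedRing

variable {R σ : Type*} [CommRing R] [SetLike σ R] [AddSubgroupClass σ R] (𝒜 : ℕ → σ)
  [GradedRing 𝒜]

theorem proj_mul (i : ℕ) (x y : R) :
    proj 𝒜 i (x * y) = ∑ jk ∈ antidiagonal i, proj 𝒜 jk.1 x * proj 𝒜 jk.2 y := by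
  simp only [proj_apply, DirectSum.decompose_mul, DirectSum.coe_mul_apply_eq_sum_antidiagonal]

theorem proj_of_mem_ne {i j : ℕ} {x : R} (hx : x ∈ 𝒜 i) (h : i ≠ j) : proj 𝒜 j x = 0 := by
  rw [proj_apply, DirectSum.decompose_of_mem_ne 𝒜 hx h]

theorem proj_of_mem {i : ℕ} {x : R} (hx : x ∈ 𝒜 i) : proj 𝒜 i x = x := by
  rw [proj_apply, DirectSum.decompose_of_mem_same 𝒜 hx]

theorem proj_mem (i : ℕ) (x : R) : proj 𝒜 i x ∈ 𝒜 i := SetLike.coe_mem _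

def idealGE (a : ℕ) : Ideal R where
  carrier := {x | ∀ i < a, proj 𝒜 i x = 0}
  zero_mem' _ _ := map_zero _
  add_mem' hx hy i hi := by rw [map_add, hx i hi, hy i hi, add_zero]
  smul_mem' c x hx i hi := by
    rw [smul_eq_mul, proj_mul]
    refine Finset.sum_eq_zero fun jk hjk => ?_
    rw [hx jk.2 (by have := mem_antidiagonal.1 hjk; omega), mul_zero]

variable {𝒜}

theorem idealGE_zero : idealGE 𝒜 0 = ⊤ :=
  eq_top_iff.2 fun _ _ _ hi => absurd hi (Nat.not_lt_zero _)

theorem idealGE_antitone : Antitone (idealGE 𝒜) :=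
  fun _ _ hab _ hx i hi => hx i (lt_of_lt_of_le hi hab)

theorem mem_idealGE_of_mem {a d : ℕ} {x : R} (hx : x ∈ 𝒜 d) (had : a ≤ d) : x ∈ idealGE 𝒜 a :=
  fun _ hi => proj_of_mem_ne 𝒜 hx (by omega)

theorem mem_idealGE_succ_iff {a : ℕ} {x : R} (hx : x ∈ idealGE 𝒜 a) :
    x ∈ idealGE 𝒜 (a + 1) ↔ proj 𝒜 a x = 0 := by
  refine ⟨fun h => h a (Nat.lt_succ_self a), fun h i hi => ?_⟩
  rcases Nat.lt_succ_iff_lt_or_eq.1 hi with hi | rfl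
  exacts [hx i hi, h]

theorem mul_mem_idealGE {a b : ℕ} {x y : R} (hx : x ∈ idealGE 𝒜 a) (hy : y ∈ idealGE 𝒜 b) :
    x * y ∈ idealGE 𝒜 (a + b) := fun i hi => by
  rw [proj_mul]
  refine Finset.sum_eq_zero fun jk hjk => ?_
  rw [mem_antidiagonal] at hjk
  rcases lt_or_ge jk.1 a with h | h
  · rw [hx _ h, zero_mul]
  · rw [hy _ (by omega), mul_zero]

theorem proj_add_mul_of_mem_idealGE {a b : ℕ} {x y : R} (hx : x ∈ idealGE 𝒜 a)
    (hy : y ∈ idealGE 𝒜 b) : proj 𝒜 (a + b) (x * y) = proj 𝒜 a x * proj 𝒜 b y := by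
  rw [proj_mul, Finset.sum_eq_single (a, b)]
  · rintro ⟨j, k⟩ hjk hne
    rw [mem_antidiagonal] at hjk
    rcases lt_or_ge j a with h | h
    · rw [hx _ h, zero_mul]
    · rw [hy _ (lt_of_not_ge fun hk => hne (Prod.ext (by omega) (by omega))), mul_zero]
  · simp

variable (𝒜) in
def veronese (n : ℕ) : Subring R where
  carrier := {x | ∀ i, ¬ n ∣ i → proj 𝒜 i x = 0}
  zero_mem' _ _ := map_zero _
  one_mem' i hi :=
    proj_of_mem_ne 𝒜 SetLike.GradedOne.one_mem fun h => hi (h ▸ dvd_zero n)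
  add_mem' hx hy i hi := by rw [map_add, hx i hi, hy i hi, add_zero]
  neg_mem' hx i hi := by rw [map_neg, hx i hi, neg_zero]
  mul_mem' {x y} hx hy i hi := by
    rw [proj_mul]
    refine Finset.sum_eq_zero fun jk hjk => ?_
    by_cases hj : n ∣ jk.1
    · have hk : ¬ n ∣ jk.2 := fun hk => hi (mem_antidiagonal.1 hjk ▸ dvd_add hj hk)
      rw [hy _ hk, mul_zero]
    · rw [hx _ hj, zero_mul]

theorem mem_veronese_of_mem {n t : ℕ} {x : R} (hx : x ∈ 𝒜 (n * t)) : x ∈ veronese 𝒜 n :=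
  fun _ hi => proj_of_mem_ne 𝒜 hx fun h => hi (h ▸ dvd_mul_right n t)

theorem pow_le_idealGE {n : ℕ} {I : Ideal R} (hI : I ≤ idealGE 𝒜 n) (t : ℕ) :
    I ^ t ≤ idealGE 𝒜 (n * t) := by
  induction t with
  | zero => simp [idealGE_zero]
  | succ t ih =>
    rw [pow_succ, Nat.mul_succ]
    exact Ideal.mul_le.2 fun x hx y hy => mul_mem_idealGE (ih hx) (hI hy)

theorem coeff_mul_mem_idealGE {n a b : ℕ} {p q : R[X]}
    (hp : ∀ t, p.coeff t ∈ idealGE 𝒜 (n * t + a)) (hq : ∀ t, q.coeff t ∈ idealGE 𝒜 (n * t + b))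
    (t : ℕ) : (p * q).coeff t ∈ idealGE 𝒜 (n * t + (a + b)) := by
  rw [coeff_mul]
  refine Ideal.sum_mem _ fun jk hjk => ?_
  have h : n * jk.1 + a + (n * jk.2 + b) = n * t + (a + b) := by
    rw [← mem_antidiagonal.1 hjk]; ring
  exact h ▸ mul_mem_idealGE (hp _) (hq _)

theorem coeff_pow_mem_idealGE {n : ℕ} {p : R[X]} (hp : ∀ t, p.coeff t ∈ idealGE 𝒜 (n * t + 1))
    (m t : ℕ) : (p ^ m).coeff t ∈ idealGE 𝒜 (n * t + m) := by
  induction m generalizing t with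
  | zero =>
    rw [pow_zero, coeff_one]
    split_ifs with ht
    · subst ht; simp [idealGE_zero]
    · exact zero_mem _
  | succ m ih => rw [pow_succ]; exact coeff_mul_mem_idealGE ih hp t

variable (𝒜) in
noncomputable def initialPoly (n : ℕ) (p : R[X]) : R[X] :=
  ∑ t ∈ p.support, monomial t (proj 𝒜 (n * t) (p.coeff t))

theorem coeff_initialPoly (n : ℕ) (p : R[X]) (t : ℕ) :
    (initialPoly 𝒜 n p).coeff t = proj 𝒜 (n * t) (p.coeff t) := by
  simp only [initialPoly, finsetSum_coeff, coeff_monomial, Finset.sum_ite_eq']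
  split_ifs with h
  · rfl
  · rw [notMem_support_iff.1 h, map_zero]

theorem initialPoly_monomial (n t : ℕ) (x : R) :
    initialPoly 𝒜 n (monomial t x) = monomial t (proj 𝒜 (n * t) x) := by
  ext s
  rw [coeff_initialPoly, coeff_monomial, coeff_monomial]
  split_ifs with h
  · rw [h]
  · exact map_zero _

theorem initialPoly_add (n : ℕ) (p q : R[X]) :
    initialPoly 𝒜 n (p + q) = initialPoly 𝒜 n p + initialPoly 𝒜 n q := by
  ext t
  simp only [coeff_initialPoly, coeff_add, map_add]

theorem initialPoly_mul {n : ℕ} {p q : R[X]} (hp : ∀ t, p.coeff t ∈ idealGE 𝒜 (n * t))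
    (hq : ∀ t, q.coeff t ∈ idealGE 𝒜 (n * t)) :
    initialPoly 𝒜 n (p * q) = initialPoly 𝒜 n p * initialPoly 𝒜 n q := by
  ext t
  simp only [coeff_initialPoly, coeff_mul, map_sum]
  refine Finset.sum_congr rfl fun jk hjk => ?_
  rw [← mem_antidiagonal.1 hjk, mul_add, proj_add_mul_of_mem_idealGE (hp _) (hq _)]

theorem proj_eval_one_initialPoly {n : ℕ} (hn : 0 < n) (p : R[X]) (t : ℕ) :
    proj 𝒜 (n * t) ((initialPoly 𝒜 n p).eval 1) = proj 𝒜 (n * t) (p.coeff t) := by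
  rw [eval_eq_sum, Polynomial.sum_def, map_sum, Finset.sum_eq_single t]
  · rw [one_pow, mul_one, coeff_initialPoly, proj_of_mem 𝒜 (proj_mem 𝒜 _ _)]
  · intro s _ hst
    rw [one_pow, mul_one, coeff_initialPoly]
    exact proj_of_mem_ne 𝒜 (proj_mem 𝒜 _ _) fun h => hst (Nat.eq_of_mul_eq_mul_left hn h)
  · intro ht
    rw [notMem_support_iff.1 ht, zero_mul, map_zero]

theorem eval_one_initialPoly_mem_veronese (n : ℕ) (p : R[X]) :
    (initialPoly 𝒜 n p).eval 1 ∈ veronese 𝒜 n := by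
  rw [eval_eq_sum, Polynomial.sum_def]
  refine Subring.sum_mem _ fun t _ => ?_
  rw [one_pow, mul_one, coeff_initialPoly]
  exact mem_veronese_of_mem (proj_mem 𝒜 _ _)

variable {n : ℕ} {I : Ideal R}

theorem coeff_mem_idealGE (hI : I ≤ idealGE 𝒜 n) (q : reesAlgebra I) (t : ℕ) :
    (q : R[X]).coeff t ∈ idealGE 𝒜 (n * t) :=
  pow_le_idealGE hI t (q.2 t)

variable (𝒜) in
noncomputable def reesToVeronese (hI : I ≤ idealGE 𝒜 n) : reesAlgebra I →+* R where
  toFun q := (initialPoly 𝒜 n q).eval 1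
  map_one' := by
    rw [OneMemClass.coe_one, ← monomial_zero_one, initialPoly_monomial, mul_zero,
      proj_of_mem 𝒜 SetLike.GradedOne.one_mem, eval_monomial, one_pow, mul_one]
  map_mul' p q := by
    rw [MulMemClass.coe_mul, initialPoly_mul (coeff_mem_idealGE hI p) (coeff_mem_idealGE hI q),
      eval_mul]
  map_zero' := by simp [initialPoly]
  map_add' p q := by rw [AddMemClass.coe_add, initialPoly_add, eval_add]

theorem reesToVeronese_apply (hI : I ≤ idealGE 𝒜 n) (q : reesAlgebra I) :
    reesToVeronese 𝒜 hI q = (initialPoly 𝒜 n q).eval 1 :=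
  rfl

theorem reesToVeronese_eq_zero_iff (hn : 0 < n) (hI : I ≤ idealGE 𝒜 n) (q : reesAlgebra I) :
    reesToVeronese 𝒜 hI q = 0 ↔ ∀ t, (q : R[X]).coeff t ∈ idealGE 𝒜 (n * t + 1) := by
  simp only [mem_idealGE_succ_iff (coeff_mem_idealGE hI q _)]
  refine ⟨fun h t => ?_, fun h => ?_⟩
  · rw [← proj_eval_one_initialPoly hn, ← reesToVeronese_apply hI, h, map_zero]
  · have h0 : initialPoly 𝒜 n q = 0 := by
      ext t
      rw [coeff_initialPoly, h t, coeff_zero]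
    rw [reesToVeronese_apply, h0, eval_zero]

theorem range_reesToVeronese (hI : I ≤ idealGE 𝒜 n) (hge : ∀ t, idealGE 𝒜 (n * t) ≤ I ^ t) :
    (reesToVeronese 𝒜 hI).range = veronese 𝒜 n := by
  refine le_antisymm ?_ fun v hv => ?_
  · rintro _ hx
    obtain ⟨q, rfl⟩ := RingHom.mem_range.1 hx
    rw [reesToVeronese_apply]
    exact eval_one_initialPoly_mem_veronese n (q : R[X])
  classical
  rw [← DirectSum.sum_support_decompose 𝒜 v]
  refine Subring.sum_mem _ fun i _ => ?_
  rw [← proj_apply]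
  by_cases hi : n ∣ i
  · obtain ⟨t, rfl⟩ := hi
    have hmem : monomial t (proj 𝒜 (n * t) v) ∈ reesAlgebra I :=
      reesAlgebra.monomial_mem.2 (hge t (mem_idealGE_of_mem (proj_mem 𝒜 _ _) le_rfl))
    refine ⟨⟨_, hmem⟩, ?_⟩
    rw [reesToVeronese_apply, initialPoly_monomial, eval_monomial, one_pow, mul_one,
      proj_of_mem 𝒜 (proj_mem 𝒜 _ _)]
  · rw [hv i hi]
    exact zero_mem _

theorem le_ker_reesToVeronese (hn : 0 < n) (hI : I ≤ idealGE 𝒜 n) {K : Ideal (reesAlgebra I)}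
    (hK : ∀ q ∈ K, ∀ t, (q : R[X]).coeff t ∈ I ^ (t + 1)) :
    K ≤ RingHom.ker (reesToVeronese 𝒜 hI) := fun q hq =>
  (reesToVeronese_eq_zero_iff hn hI q).2 fun t =>
    idealGE_antitone (by rw [mul_add, mul_one]; omega) (pow_le_idealGE hI _ (hK q hq t))

theorem pow_mem_of_reesToVeronese_eq_zero (hn : 0 < n) (hI : I ≤ idealGE 𝒜 n)
    (hge : ∀ t, idealGE 𝒜 (n * t) ≤ I ^ t) {K : Ideal (reesAlgebra I)}
    (hK : ∀ q : reesAlgebra I, (∀ t, (q : R[X]).coeff t ∈ I ^ (t + 1)) → q ∈ K)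
    {q : reesAlgebra I} (hq : reesToVeronese 𝒜 hI q = 0) : q ^ n ∈ K := by
  refine hK _ fun t => hge (t + 1) ?_
  rw [SubmonoidClass.coe_pow, mul_add, mul_one]
  exact coeff_pow_mem_idealGE ((reesToVeronese_eq_zero_iff hn hI q).1 hq) n t

theorem radical_eq_ker_reesToVeronese [IsReduced R] (hn : 0 < n) (hI : I ≤ idealGE 𝒜 n)
    (hge : ∀ t, idealGE 𝒜 (n * t) ≤ I ^ t) {K : Ideal (reesAlgebra I)}
    (hK : ∀ q : reesAlgebra I, q ∈ K ↔ ∀ t, (q : R[X]).coeff t ∈ I ^ (t + 1)) :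
    K.radical = RingHom.ker (reesToVeronese 𝒜 hI) := by
  refine le_antisymm (fun q ⟨m, hm⟩ => ?_) fun q hq =>
    ⟨n, pow_mem_of_reesToVeronese_eq_zero hn hI hge (fun q => (hK q).2) hq⟩
  have hψ := le_ker_reesToVeronese hn hI (fun q => (hK q).1) hm
  rw [RingHom.mem_ker, map_pow] at hψ
  exact IsNilpotent.eq_zero ⟨m, hψ⟩

end GradedRing

open GradedRing

theorem assoc_graded_nilpotent_and_red_iso_veronese_general
    (R : Type*) [CommRing R] [IsReduced R]
    (𝒜 : ℕ → AddSubgroup R) [GradedRing 𝒜]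
    (n : ℕ) (hn : 1 ≤ n) (I : Ideal R)
    (hI : ∀ x : R, x ∈ I ↔ ∀ i : ℕ, i < n → (DirectSum.decompose 𝒜 x i : R) = 0)
    (hpow : ∀ t : ℕ, 1 ≤ t → ∀ x : R,
      x ∈ I ^ t ↔ ∀ i : ℕ, i < n * t → (DirectSum.decompose 𝒜 x i : R) = 0)
    (N : Subalgebra R (Polynomial R))
    (hN : ∀ p : Polynomial R, p ∈ N ↔ ∀ t : ℕ, p.coeff t ∈ I ^ t)
    (K : Ideal ↥N)
    (hK : ∀ q : ↥N, q ∈ K ↔ ∀ t : ℕ, (q : Polynomial R).coeff t ∈ I ^ (t + 1))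
    (V : Subring R)
    (hV : ∀ x : R, x ∈ V ↔ ∀ i : ℕ, ¬ n ∣ i → (DirectSum.decompose 𝒜 x i : R) = 0) :
    (∀ (t d : ℕ) (x : R), x ∈ 𝒜 d → n * t < d →
      ∀ q : ↥N, (q : Polynomial R) = Polynomial.monomial t x →
        IsNilpotent (Ideal.Quotient.mk K q)) ∧
      Nonempty ((↥N ⧸ K) ⧸ nilradical (↥N ⧸ K) ≃+* ↥V) := by
  have hIn : I ≤ idealGE 𝒜 n := fun x hx => (hI x).1 hx
  have hge : ∀ t, idealGE 𝒜 (n * t) ≤ I ^ t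
    | 0 => by simp
    | t + 1 => fun x hx => (hpow (t + 1) t.succ_pos x).2 hx
  obtain rfl : N = reesAlgebra I := SetLike.ext hN
  obtain rfl : V = veronese 𝒜 n := SetLike.ext hV
  refine ⟨fun t d x hx hd q hq => ⟨n, ?_⟩,
    ⟨((reesToVeronese 𝒜 hIn).quotientNilradicalEquivRange
      (radical_eq_ker_reesToVeronese hn hIn hge hK)).trans
        (RingEquiv.subringCongr (range_reesToVeronese hIn hge))⟩⟩
  rw [← map_pow, Ideal.Quotient.eq_zero_iff_mem]
  refine pow_mem_of_reesToVeronese_eq_zero hn hIn hge (fun q => (hK q).2)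
    ((reesToVeronese_eq_zero_iff hn hIn q).2 fun s => ?_)
  rw [hq, coeff_monomial]
  split_ifs with hts
  · subst hts
    exact mem_idealGE_of_mem hx hd
  · exact zero_mem _

/-- Let `R` be an `ℕ`-graded Noetherian ring with `I = R_{≥n}` for some `n ≥ 1` such that
`R_{≥nt} = Iᵗ` for all `t ≥ 1`.  Realize the associated graded ring
`G = ⊕_{t ≥ 0} Iᵗ/Iᵗ⁺¹` as `N/K`, where `N = ⊕ Iᵗ Xᵗ ⊆ R[X]` is the Rees algebra and
`K ⊆ N` the ideal of elements whose `t`-th coefficient lies in `Iᵗ⁺¹`.  Then every homogeneous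
element of the `t`-th piece represented by `x ∈ R` of internal degree `d > nt` is nilpotent in
`G`; consequently, when `R` is reduced, the reduction `G/nilradical(G)` is isomorphic to the
Veronese subring `V = ⊕_{t ≥ 0} R_{nt}` of `R`. -/
theorem assoc_graded_nilpotent_and_red_iso_veronese
    (R : Type*) [CommRing R] [IsNoetherianRing R] [IsReduced R]
    (𝒜 : ℕ → AddSubgroup R) [GradedRing 𝒜]
    (n : ℕ) (hn : 1 ≤ n) (I : Ideal R)
    (hI : ∀ x : R, x ∈ I ↔ ∀ i : ℕ, i < n → (DirectSum.decompose 𝒜 x i : R) = 0)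
    (hpow : ∀ t : ℕ, 1 ≤ t → ∀ x : R,
      x ∈ I ^ t ↔ ∀ i : ℕ, i < n * t → (DirectSum.decompose 𝒜 x i : R) = 0)
    (N : Subalgebra R (Polynomial R))
    (hN : ∀ p : Polynomial R, p ∈ N ↔ ∀ t : ℕ, p.coeff t ∈ I ^ t)
    (K : Ideal ↥N)
    (hK : ∀ q : ↥N, q ∈ K ↔ ∀ t : ℕ, (q : Polynomial R).coeff t ∈ I ^ (t + 1))
    (V : Subring R)
    (hV : ∀ x : R, x ∈ V ↔ ∀ i : ℕ, ¬ n ∣ i → (DirectSum.decompose 𝒜 x i : R) = 0) :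
    (∀ (t d : ℕ) (x : R), x ∈ 𝒜 d → n * t < d →
      ∀ q : ↥N, (q : Polynomial R) = Polynomial.monomial t x →
        IsNilpotent (Ideal.Quotient.mk K q)) ∧
      Nonempty ((↥N ⧸ K) ⧸ nilradical (↥N ⧸ K) ≃+* ↥V) :=
  assoc_graded_nilpotent_and_red_iso_veronese_general R 𝒜 n hn I hI hpow N hN K hK V hV
end

section
/- Let R be a reduced N-graded ring with R_0 a field k, and let R^sn be a ring between R and its total quotient ring such that the inclusion R ⊆ R^sn induces a bijection on prime spectra and isomorphisms of residue fields. If the degree-0 part R^sn_0 of the induced grading is a reduced Artinian local ring, then R^sn_0 = k. -/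
/-!
The kernel of the projection `R^sn → R^sn₀` is prime, since a reduced Artinian local ring is a
field. Triviality of the residue field extension at this prime writes every `y ∈ R^sn₀` as
`y · b = a` modulo the kernel with `a, b ∈ R`; projecting to degree `0` turns this into
`y · b₀ = a₀` with `a₀, b₀ ∈ k` and `b₀ ≠ 0`, so `y = a₀ / b₀ ∈ k`.
-/

lemma RingHom.mem_range_of_mul_map_eq {K S : Type*} [DivisionRing K] [Semiring S]
    (ψ : K →+* S) {y : S} {a b : K} (hb : ψ b ≠ 0) (h : y * ψ b = ψ a) : y ∈ Set.range ψ := by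
  have hb' : b ≠ 0 := by rintro rfl; exact hb (map_zero ψ)
  refine ⟨a * b⁻¹, ?_⟩
  rw [map_mul, ← h, mul_assoc, ← map_mul, mul_inv_cancel₀ hb', map_one, mul_one]

namespace GradedRingHom

variable {ι A B σ τ : Type*} [DecidableEq ι] [AddCommMonoid ι] [PartialOrder ι]
  [CanonicallyOrderedAdd ι] [Semiring A] [Semiring B] [SetLike σ A] [SetLike τ B]
  [AddSubmonoidClass σ A] [AddSubmonoidClass τ B] {𝒜 : ι → σ} {ℬ : ι → τ}
  [GradedRing 𝒜] [GradedRing ℬ]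

lemma projZeroRingHom'_map (φ : 𝒜 →+*ᵍ ℬ) (x : A) :
    GradedRing.projZeroRingHom' ℬ (φ x) =
      φ.gradedZeroRingHom (GradedRing.projZeroRingHom' 𝒜 x) := by
  ext
  simp

end GradedRingHom

theorem seminormalization_degree_zero_eq_base_field_general
    (R Rsn : Type*) [CommRing R] [CommRing Rsn]
    (𝒜 : ℕ → AddSubgroup R) [GradedRing 𝒜] (hk : IsField ↥(𝒜 0))
    (ℬ : ℕ → AddSubgroup Rsn) [GradedRing ℬ]
    (f : R →+* Rsn)
    (hgr : ∀ (i : ℕ), ∀ x ∈ 𝒜 i, f x ∈ ℬ i)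
    (hres : ∀ (P : Ideal Rsn), P.IsPrime → ∀ y : Rsn,
      ∃ a b : R, f b ∉ P ∧ y * f b - f a ∈ P)
    [IsReduced ↥(ℬ 0)] [IsArtinianRing ↥(ℬ 0)] [IsLocalRing ↥(ℬ 0)] :
    ∀ y ∈ ℬ 0, ∃ x ∈ 𝒜 0, f x = y := by
  intro y hy
  let φ : 𝒜 →+*ᵍ ℬ := ⟨f, hgr _ _⟩
  let π := GradedRing.projZeroRingHom' ℬ
  have _ : IsDomain ↥(ℬ 0) :=
    (IsArtinianRing.isField_of_isReduced_of_isLocalRing ↥(ℬ 0)).isDomain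
  obtain ⟨a, b, hb, hab⟩ := hres (RingHom.ker π) (RingHom.ker_isPrime π) y
  have hπy : π y = ⟨y, hy⟩ := GradedRing.projZeroRingHom'_apply_coe ℬ ⟨y, hy⟩
  rw [RingHom.mem_ker] at hb hab
  rw [map_sub, map_mul, sub_eq_zero, hπy] at hab
  let ψ := φ.gradedZeroRingHom
  have hb₀ : ψ (GradedRing.projZeroRingHom' 𝒜 b) ≠ 0 := by
    rwa [← φ.projZeroRingHom'_map]
  have hab₀ : ⟨y, hy⟩ * ψ (GradedRing.projZeroRingHom' 𝒜 b) =
      ψ (GradedRing.projZeroRingHom' 𝒜 a) := by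
    rwa [← φ.projZeroRingHom'_map, ← φ.projZeroRingHom'_map]
  let _ := hk.toField
  obtain ⟨x, hx⟩ := ψ.mem_range_of_mul_map_eq hb₀ hab₀
  exact ⟨x, x.2, congrArg Subtype.val hx⟩

/-- Let `R` be a reduced `ℕ`-graded ring with `R₀ = k` a field, and let `R^sn` be a ring
between `R` and its total quotient ring such that `Spec R^sn → Spec R` is a bijection
inducing isomorphisms of residue fields (here: the residue field extensions are trivial,
i.e. `κ(P ∩ R) → κ(P)` is surjective for every prime `P` of `R^sn`).  If the degree-`0`
part of the induced grading on `R^sn` is a reduced Artinian local ring, then `R^sn₀ = k`,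
i.e. the degree-`0` part of `R^sn` is exactly the image of `R₀`. -/
theorem seminormalization_degree_zero_eq_base_field
    (R Rsn : Type*) [CommRing R] [CommRing Rsn] [IsReduced R]
    (𝒜 : ℕ → AddSubgroup R) [GradedRing 𝒜] (hk : IsField ↥(𝒜 0))
    (ℬ : ℕ → AddSubgroup Rsn) [GradedRing ℬ]
    (f : R →+* Rsn) (hf : Function.Injective f)
    (g : Rsn →+* FractionRing R) (hg : Function.Injective g)
    (hgf : g.comp f = algebraMap R (FractionRing R))
    (hgr : ∀ (i : ℕ), ∀ x ∈ 𝒜 i, f x ∈ ℬ i)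
    (hspec : Function.Bijective fun P : PrimeSpectrum Rsn => PrimeSpectrum.comap f P)
    (hres : ∀ (P : Ideal Rsn), P.IsPrime → ∀ y : Rsn,
      ∃ a b : R, f b ∉ P ∧ y * f b - f a ∈ P)
    [IsReduced ↥(ℬ 0)] [IsArtinianRing ↥(ℬ 0)] [IsLocalRing ↥(ℬ 0)] :
    ∀ y ∈ ℬ 0, ∃ x ∈ 𝒜 0, f x = y :=
  seminormalization_degree_zero_eq_base_field_general R Rsn 𝒜 hk ℬ f hgr hres
end

section
/- Let (R, m) be an F-finite Noetherian local ring of prime characteristic p. If the Frobenius endomorphism F : R → R is pure, then F is split, i.e., there exists an R-linear map φ : F_* R → R with φ ∘ F = id_R. -/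
/-!
Purity of `R → S` means that a finite system of linear equations over `R` that is solvable
in `S` is already solvable in `R`: the obstruction is the class of the right-hand side in a
cokernel `M`, and it dies in `M ⊗[R] S`. When `S` is finitely presented (here: finite over a
Noetherian ring), choose a presentation `R^m → R^n ↠ S` and a lift `c ∈ R^n` of `1`. A retraction
`S → R` is the same as a linear form on `R^n` killing the relations and taking the value `1`
at `c`; this is a finite linear system, and the covering map `R^n ↠ S` solves it over `S`.
-/

universe u v

open TensorProduct

def Algebra.IsPure (R : Type u) (S : Type v) [CommRing R] [CommRing S] [Algebra R S] : Prop :=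
  ∀ (M : Type u) [AddCommGroup M] [Module R M], Function.Injective fun m : M => m ⊗ₜ[R] (1 : S)

namespace Algebra.IsPure

variable {R : Type u} {S : Type v} [CommRing R] [CommRing S] [Algebra R S]

theorem mem_range_of_tmul_one_mem_range_rTensor (hS : IsPure R S) {M N : Type u}
    [AddCommGroup M] [Module R M] [AddCommGroup N] [Module R N] (T : M →ₗ[R] N) {b : N}
    (hb : b ⊗ₜ[R] (1 : S) ∈ LinearMap.range (T.rTensor S)) : b ∈ LinearMap.range T := by
  obtain ⟨w, hw⟩ := hb
  rw [← Submodule.Quotient.mk_eq_zero, ← Submodule.mkQ_apply]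
  apply hS _
  have hmkQ := congrArg ((LinearMap.range T).mkQ.rTensor S) hw
  rw [← LinearMap.comp_apply, ← LinearMap.rTensor_comp, LinearMap.range_mkQ_comp,
    LinearMap.rTensor_zero, LinearMap.zero_apply, LinearMap.rTensor_tmul] at hmkQ
  simpa using hmkQ.symm

theorem exists_dual_comp_eq (hS : IsPure R S) {P Q : Type u}
    [AddCommGroup P] [Module R P] [Module.Finite R P] [Module.Projective R P]
    [AddCommGroup Q] [Module R Q] [Module.Finite R Q] [Module.Projective R Q]
    (h : Q →ₗ[R] P) (b : Module.Dual R Q) (f : P →ₗ[R] S)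
    (hf : f ∘ₗ h = Algebra.linearMap R S ∘ₗ b) :
    ∃ x : Module.Dual R P, x ∘ₗ h = b := by
  suffices b ⊗ₜ[R] (1 : S) ∈ LinearMap.range (h.dualMap.rTensor S) from
    hS.mem_range_of_tmul_one_mem_range_rTensor h.dualMap this
  obtain ⟨w, rfl⟩ := (dualTensorHom_bijective (R := R) (M := P) (N := S)).2 f
  refine ⟨w, (dualTensorHom_bijective (R := R) (M := Q) (N := S)).1 ?_⟩
  rw [← LinearMap.comp_apply, dualTensorHom_comp_rTensor_dualMap]
  ext q
  simpa [Algebra.algebraMap_eq_smul_one] using LinearMap.congr_fun hf q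

theorem exists_retraction (hS : IsPure R S) [Module.FinitePresentation R S] :
    ∃ φ : S →ₗ[R] R, ∀ r : R, φ (algebraMap R S r) = r := by
  obtain ⟨n, m, f, g, hf, hfg⟩ := Module.FinitePresentation.exists_fin' R S
  obtain ⟨c, hc⟩ := hf 1
  obtain ⟨x, hx⟩ := hS.exists_dual_comp_eq (g.coprod (LinearMap.toSpanSingleton R _ c))
    (LinearMap.snd R _ R) f (by ext <;> simp [hfg.apply_apply_eq_zero, hc])
  have hxg : LinearMap.range g ≤ LinearMap.ker x := by
    rintro _ ⟨z, rfl⟩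
    simpa using LinearMap.congr_fun hx (z, 0)
  refine ⟨(LinearMap.range g).liftQ x hxg ∘ₗ (hfg.linearEquivOfSurjective hf).symm.toLinearMap,
    fun r => ?_⟩
  have hxc : x c = 1 := by simpa using LinearMap.congr_fun hx (0, 1)
  rw [Algebra.algebraMap_eq_smul_one, ← hc, ← map_smul]
  simp [hxc]

end Algebra.IsPure

theorem frobenius_split_of_pure_general
    (R : Type u) [CommRing R] [IsNoetherianRing R]
    (S : Type u) [CommRing S] [Algebra R S]
    [Module.Finite R S]
    (hpure : ∀ (M : Type u) [AddCommGroup M] [Module R M],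
      Function.Injective fun m : M => m ⊗ₜ[R] (1 : S)) :
    ∃ φ : S →ₗ[R] R, ∀ r : R, φ (algebraMap R S r) = r := by
  have := Module.finitePresentation_of_finite R S
  exact Algebra.IsPure.exists_retraction hpure

/-- Let `(R, m)` be an `F`-finite Noetherian local ring of prime characteristic `p`.  If the
Frobenius endomorphism `F : R → R` is pure, then `F` is split: there is an `R`-linear map
`φ : F_* R → R` with `φ ∘ F = id`.  Here `S` is a copy of `R` (via the ring isomorphism `e`)
equipped with the `R`-algebra structure given by Frobenius, so that `S = F_* R`;  `F`-finite
means `S` is module-finite over `R`, purity means `M → M ⊗_R S` is injective for every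
`R`-module `M`, and the conclusion is an `R`-linear retraction of `algebraMap R S`. -/
theorem frobenius_split_of_pure
    (R : Type u) [CommRing R] [IsNoetherianRing R] [IsLocalRing R]
    (p : ℕ) [Fact p.Prime] [CharP R p] [ExpChar R p]
    (S : Type u) [CommRing S] [Algebra R S] (e : S ≃+* R)
    (he : ∀ r : R, e (algebraMap R S r) = frobenius R p r)
    [Module.Finite R S]
    (hpure : ∀ (M : Type u) [AddCommGroup M] [Module R M],
      Function.Injective fun m : M => m ⊗ₜ[R] (1 : S)) :
    ∃ φ : S →ₗ[R] R, ∀ r : R, φ (algebraMap R S r) = r :=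
  frobenius_split_of_pure_general R S hpure
end

section
/- Let (R, m) be a Noetherian local ring of prime characteristic p, let x ∈ m be a nonzerodivisor on R, and let i ≥ 0. Consider the commutative diagram of Frobenius actions on the long exact sequence of local cohomology induced by 0 → R →(·x) R → R/xR → 0, where H^i_m(R/xR) carries the natural Frobenius F and H^{i+1}_m(R) carries the twisted action x^{p−1}F. If F is injective on H^i_m(R/xR) for all i and multiplication by x is surjective on H^{i+1}_m(R) for all i, then x^{p−1}F is injective on H^{i+1}_m(R) for all i. -/
/-- Let `(R, m)` be a Noetherian local ring of prime characteristic `p`, `x ∈ m` a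
nonzerodivisor, and for each `i` let `H i = H^i_m(R/xR)` and `G i = H^i_m(R)` be the local
cohomology modules, fitting (for each `i`) into the exact sequences
`0 → H i → G (i+1) → (·x) G (i+1) → 0` coming from `0 → R → R → R/xR → 0` (the
multiplication-by-`x` maps being surjective by hypothesis), with `G i` `x`-power torsion.
`H i` carries a natural Frobenius action `FH i` and `G (i+1)` the twisted action
`x^(p-1) • FG (i+1)`, compatibly with the connecting map `δ i`.  If the Frobenius `FH i`
is injective on `H i` for all `i`, then the twisted Frobenius `x^(p-1) FG` is injective on
`G (i+1)` for all `i`. -/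
theorem twisted_frobenius_injective
    (R : Type*) [CommRing R] [IsNoetherianRing R] [IsLocalRing R]
    (p : ℕ) [Fact p.Prime] [CharP R p]
    (x : R) (hx : x ∈ nonZeroDivisors R) (hxm : x ∈ IsLocalRing.maximalIdeal R)
    (H G : ℕ → Type*)
    [∀ i, AddCommGroup (H i)] [∀ i, Module R (H i)]
    [∀ i, AddCommGroup (G i)] [∀ i, Module R (G i)]
    (FH : ∀ i, H i →+ H i) (FG : ∀ i, G i →+ G i)
    (hFH : ∀ (i : ℕ) (r : R) (a : H i), FH i (r • a) = r ^ p • FH i a)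
    (hFG : ∀ (i : ℕ) (r : R) (b : G i), FG i (r • b) = r ^ p • FG i b)
    (δ : ∀ i, H i →ₗ[R] G (i + 1))
    (hδinj : ∀ i, Function.Injective (δ i))
    (hexact : ∀ (i : ℕ) (b : G (i + 1)), x • b = 0 ↔ b ∈ LinearMap.range (δ i))
    (hsurj : ∀ i : ℕ, Function.Surjective fun b : G (i + 1) => x • b)
    (hsq : ∀ (i : ℕ) (a : H i), δ i (FH i a) = x ^ (p - 1) • FG (i + 1) (δ i a))
    (htor : ∀ (i : ℕ) (b : G i), ∃ n : ℕ, x ^ n • b = 0)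
    (hFHinj : ∀ i, Function.Injective (FH i)) :
    ∀ i : ℕ, Function.Injective fun b : G (i + 1) => x ^ (p - 1) • FG (i + 1) b := by
  intro i
  have key : ∀ n (b : G (i + 1)), x ^ n • b = 0 → x ^ (p - 1) • FG (i + 1) b = 0 → b = 0 := by
    intro n
    induction n with
    | zero => intro b h _; simpa using h
    | succ n ih =>
      intro b hn hb
      have hxb : x • b = 0 := by
        apply ih
        · rw [smul_smul, ← pow_succ]; exact hn
        · rw [hFG, smul_comm, hb, smul_zero]
      obtain ⟨a, ha⟩ := (hexact i b).mp hxb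
      have h1 : δ i (FH i a) = 0 := by rw [hsq, ha, hb]
      have h2 : FH i a = 0 := hδinj i (by rw [h1, map_zero])
      have h3 : a = 0 := hFHinj i (by rw [h2, map_zero])
      rw [← ha, h3, map_zero]
  intro a b hab
  obtain ⟨n, hn⟩ := htor (i + 1) (a - b)
  have : x ^ (p - 1) • FG (i + 1) (a - b) = 0 := by
    rw [map_sub, smul_sub]; simp only [] at hab; rw [hab, sub_self]
  have := key n (a - b) hn this
  exact sub_eq_zero.mp this
end
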